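/- Let x = (J_n, u, e_1ᵗ) ∈ 𝔤𝔩_n(𝔽) × 𝔽^{n×1} × 𝔽^{1×n} with u = (y_1,…,y_n)ᵗ, y_n ≠ 0, under the MVW-extended action of GL_n(𝔽) ⋊ {±1} where (g,−1)·(X,u,v) = (gXᵗg⁻¹, −gvᵗ, −uᵗg⁻¹). Let h be the k×k Hankel-type matrix with h_{ij} = −y_{i+j−1} for i+j ≤ n+1 (k = n) and 0 otherwise, and g_0 = h. Then (g_0, −1) stabilizes x, (g_0,−1)² = (I_n, 1), and conjugation by (g_0,−1) sends (g,1) in the stabilizer to (g^{−t}, 1); hence the extended stabilizer of x is isomorphic to ℤ/2ℤ (for the case k = n where the GL-stabilizer is trivial). -/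

import Mathlib

open Matrix

/-- The `n×n` nilpotent Jordan block, with `1`'s on the superdiagonal. -/
def Jmat (𝔽 : Type*) [Field 𝔽] (n : ℕ) : Matrix (Fin n) (Fin n) 𝔽 :=
  Matrix.of fun i j => if (i : ℕ) + 1 = (j : ℕ) then 1 else 0

section Aux
variable {𝔽 : Type*} [Field 𝔽] {n : ℕ}

lemma mul_J_apply (M : Matrix (Fin n) (Fin n) 𝔽) (i j : Fin n) :
    (M * Jmat 𝔽 n) i j =
      if h : 0 < (j : ℕ) then M i ⟨(j : ℕ) - 1, by omega⟩ else 0 := by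
  rw [Matrix.mul_apply]
  split_ifs with h
  · rw [Finset.sum_eq_single (⟨(j : ℕ) - 1, by omega⟩ : Fin n)]
    · have : ((⟨(j : ℕ) - 1, by omega⟩ : Fin n) : ℕ) + 1 = (j : ℕ) := by simp; omega
      simp [Jmat, this]
    · intro k _ hk
      have : ¬ ((k : ℕ) + 1 = (j : ℕ)) := by
        intro hc; exact hk (Fin.ext (by simp; omega))
      simp [Jmat, this]
    · simp
  · apply Finset.sum_eq_zero
    intro k _
    have : ¬ ((k : ℕ) + 1 = (j : ℕ)) := by omega
    simp [Jmat, this]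

lemma J_mul_apply (M : Matrix (Fin n) (Fin n) 𝔽) (i j : Fin n) :
    (Jmat 𝔽 n * M) i j =
      if h : (i : ℕ) + 1 < n then M ⟨(i : ℕ) + 1, h⟩ j else 0 := by
  rw [Matrix.mul_apply]
  split_ifs with h
  · rw [Finset.sum_eq_single (⟨(i : ℕ) + 1, h⟩ : Fin n)]
    · simp [Jmat]
    · intro k _ hk
      have : ¬ ((i : ℕ) + 1 = (k : ℕ)) := by
        intro hc; exact hk (Fin.ext (by simp; omega))
      simp [Jmat, this]
    · simp
  · apply Finset.sum_eq_zero
    intro k _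
    have : ¬ ((i : ℕ) + 1 = (k : ℕ)) := by omega
    simp [Jmat, this]

lemma mul_Jt_apply (M : Matrix (Fin n) (Fin n) 𝔽) (i j : Fin n) :
    (M * (Jmat 𝔽 n)ᵀ) i j =
      if h : (j : ℕ) + 1 < n then M i ⟨(j : ℕ) + 1, h⟩ else 0 := by
  rw [Matrix.mul_apply]
  split_ifs with h
  · rw [Finset.sum_eq_single (⟨(j : ℕ) + 1, h⟩ : Fin n)]
    · simp [Jmat]
    · intro k _ hk
      have : ¬ ((j : ℕ) + 1 = (k : ℕ)) := by
        intro hc; exact hk (Fin.ext (by simp; omega))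
      simp [Jmat, this]
    · simp
  · apply Finset.sum_eq_zero
    intro k _
    have : ¬ ((j : ℕ) + 1 = (k : ℕ)) := by omega
    simp [Jmat, this]

/-- A matrix commuting with `J` whose first row is `e₁` is the identity. -/
lemma centralizer_row_eq_one (hn : 0 < n) (M : Matrix (Fin n) (Fin n) 𝔽)
    (hcomm : M * Jmat 𝔽 n = Jmat 𝔽 n * M)
    (hrow : ∀ j : Fin n, M ⟨0, hn⟩ j = if (j : ℕ) = 0 then 1 else 0) :
    M = 1 := by
  have hE : ∀ i j : Fin n, (M * Jmat 𝔽 n) i j = (Jmat 𝔽 n * M) i j := by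
    intro i j; rw [hcomm]
  have key : ∀ i (hi : i < n) (j : Fin n),
      M ⟨i, hi⟩ j = if i = (j : ℕ) then 1 else 0 := by
    intro i
    induction i with
    | zero =>
      intro hi j
      rw [hrow j]
      congr 1
      simp [eq_comm]
    | succ i ih =>
      intro hi j
      have hi' : i < n := by omega
      rcases Nat.eq_zero_or_pos (j : ℕ) with hj | hj
      · have := hE ⟨i, hi'⟩ j
        rw [mul_J_apply, J_mul_apply] at this
        rw [dif_neg (by omega), dif_pos (by simp only [Fin.val_mk]; omega)] at this
        rw [← this]
        rw [if_neg (by omega)]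
      · have := hE ⟨i, hi'⟩ j
        rw [mul_J_apply, J_mul_apply] at this
        rw [dif_pos hj, dif_pos (by simp only [Fin.val_mk]; omega)] at this
        rw [← this, ih hi']
        simp only
        congr 1
        simp [eq_iff_iff]
        omega
  ext i j
  rw [show i = (⟨(i : ℕ), i.isLt⟩ : Fin n) from rfl, key (i : ℕ) i.isLt j,
    Matrix.one_apply]
  congr 1
  simp [Fin.ext_iff]

/-- Version with the first-row hypothesis phrased via `vecMul`. -/
lemma centralizer_row_eq_one' (hn : 0 < n) (M : Matrix (Fin n) (Fin n) 𝔽)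
    (hcomm : M * Jmat 𝔽 n = Jmat 𝔽 n * M)
    (hrow : Pi.single (⟨0, hn⟩ : Fin n) (1 : 𝔽) ᵥ* M = Pi.single ⟨0, hn⟩ 1) :
    M = 1 := by
  apply centralizer_row_eq_one hn M hcomm
  intro j
  rw [Matrix.single_one_vecMul, Matrix.row_apply'] at hrow
  rw [congrFun hrow j]
  simp [Pi.single_apply, Fin.ext_iff]

end Aux

/-- for `x = (Jₙ, u, e₁ᵗ)` with `u = (y₁,…,yₙ)ᵗ`, `yₙ ≠ 0`, and the
Hankel matrix `g₀` with `(g₀)_{ij} = −y_{i+j−1}` (and `0` past the antidiagonal):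
`g₀` is invertible and symmetric (so `(g₀,−1)² = 1`, i.e. `g₀ · g₀⁻ᵗ = 1`), the element
`(g₀,−1)` stabilizes `x` under the MVW-extended action, conjugation by `(g₀,−1)` sends an
element `(g,1)` of the stabilizer to `(g⁻ᵗ,1)`, and the extended stabilizer of `x` is
exactly the two-element group `{(1,1), (g₀,−1)}` (here the sign `+1` is `true` and `−1`
is `false`). -/
theorem stmt19 {𝔽 : Type*} [Field 𝔽] [IsAlgClosed 𝔽] [CharZero 𝔽]
    {n : ℕ} (hn : 0 < n) (y : Fin n → 𝔽) (hyn : y ⟨n - 1, by omega⟩ ≠ 0) :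
    letI g₀ : Matrix (Fin n) (Fin n) 𝔽 :=
      Matrix.of fun i j =>
        if h : (i : ℕ) + (j : ℕ) < n then -(y ⟨(i : ℕ) + (j : ℕ), h⟩) else 0
    letI e₁ : Fin n → 𝔽 := Pi.single ⟨0, hn⟩ 1
    -- (g₀, −1) is a well-defined element of the MVW extension
    IsUnit g₀ ∧
    -- (g₀,−1)·x = x : g₀ Jₙᵗ g₀⁻¹ = Jₙ, −g₀ e₁ = u, −uᵗ g₀⁻¹ = e₁
    (g₀ * (Jmat 𝔽 n)ᵀ * g₀⁻¹ = Jmat 𝔽 n ∧ -(g₀ *ᵥ e₁) = y ∧ -(y ᵥ* g₀⁻¹) = e₁) ∧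
    -- (g₀,−1)² = (Iₙ,1)
    (g₀ * (g₀ᵀ)⁻¹ = 1) ∧
    -- conjugation by (g₀,−1) sends a stabilizer element (g,1) to (g⁻ᵗ,1)
    (∀ g : Matrix.GeneralLinearGroup (Fin n) 𝔽,
      ((g : Matrix (Fin n) (Fin n) 𝔽) * Jmat 𝔽 n = Jmat 𝔽 n * (g : Matrix (Fin n) (Fin n) 𝔽) ∧
        (g : Matrix (Fin n) (Fin n) 𝔽) *ᵥ y = y ∧
        e₁ ᵥ* (g : Matrix (Fin n) (Fin n) 𝔽) = e₁) →
      g₀ * (((g : Matrix (Fin n) (Fin n) 𝔽)⁻¹)ᵀ) * g₀⁻¹ = ((g : Matrix (Fin n) (Fin n) 𝔽)⁻¹)ᵀ) ∧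
    -- the extended stabilizer is {(1,1), (g₀,−1)} ≃ ℤ/2ℤ
    ({p : Matrix (Fin n) (Fin n) 𝔽 × Bool |
        IsUnit p.1 ∧
        (p.2 = true →
          (p.1 * Jmat 𝔽 n = Jmat 𝔽 n * p.1 ∧ p.1 *ᵥ y = y ∧ e₁ ᵥ* p.1 = e₁)) ∧
        (p.2 = false →
          (p.1 * (Jmat 𝔽 n)ᵀ = Jmat 𝔽 n * p.1 ∧ -(p.1 *ᵥ e₁) = y ∧ e₁ ᵥ* p.1 = -y))} =
      {((1 : Matrix (Fin n) (Fin n) 𝔽), true), (g₀, false)}) := by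
  set g₀ : Matrix (Fin n) (Fin n) 𝔽 :=
    Matrix.of fun i j =>
      if h : (i : ℕ) + (j : ℕ) < n then -(y ⟨(i : ℕ) + (j : ℕ), h⟩) else 0 with hg₀def
  set e₁ : Fin n → 𝔽 := Pi.single ⟨0, hn⟩ 1 with he₁def
  have hg : ∀ i j : Fin n, g₀ i j =
      if h : (i : ℕ) + (j : ℕ) < n then -(y ⟨(i : ℕ) + (j : ℕ), h⟩) else 0 :=
    fun i j => rfl
  -- symmetry
  have hsymm : g₀ᵀ = g₀ := by
    ext i j
    show g₀ j i = g₀ i j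
    rw [hg, hg]
    split_ifs with h1 h2 h2
    · exact congrArg Neg.neg (congrArg y (Fin.ext (by simp; omega)))
    · omega
    · omega
    · rfl
  -- invertibility
  have hunit : IsUnit g₀ := by
    rw [Matrix.isUnit_iff_isUnit_det, isUnit_iff_ne_zero]
    have hperm := Matrix.det_permute (Fin.revPerm) g₀
    have hdiag : ∀ i : Fin n, (g₀.submatrix (Fin.revPerm : Equiv.Perm (Fin n)) id) i i
        = -(y ⟨n - 1, by omega⟩) := by
      intro i
      have hiv := i.isLt
      simp only [Matrix.submatrix_apply, id_eq, Fin.revPerm_apply]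
      rw [hg]
      rw [dif_pos (by simp [Fin.val_rev]; omega)]
      exact congrArg Neg.neg (congrArg y (Fin.ext (by simp [Fin.val_rev]; omega)))
    have hA : (g₀.submatrix (Fin.revPerm : Equiv.Perm (Fin n)) id).det ≠ 0 := by
      rw [Matrix.det_of_lowerTriangular _ ?ht]
      case ht =>
        intro i j hij
        simp only [OrderDual.toDual_lt_toDual] at hij
        simp only [Matrix.submatrix_apply, id_eq, Fin.revPerm_apply]
        rw [hg]
        rw [dif_neg (by simp [Fin.val_rev]; omega)]
      · rw [Finset.prod_congr rfl fun i _ => hdiag i, Finset.prod_const]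
        simp only [Finset.card_univ, Fintype.card_fin]
        exact pow_ne_zero _ (neg_ne_zero.mpr hyn)
    intro h0
    rw [h0, mul_zero] at hperm
    exact hA hperm
  have hdetu : IsUnit g₀.det := (Matrix.isUnit_iff_isUnit_det _).mp hunit
  have hGi : g₀ * g₀⁻¹ = 1 := Matrix.mul_nonsing_inv _ hdetu
  have hiG : g₀⁻¹ * g₀ = 1 := Matrix.nonsing_inv_mul _ hdetu
  -- commutation with J
  have hcommJ : g₀ * (Jmat 𝔽 n)ᵀ = Jmat 𝔽 n * g₀ := by
    ext i j
    have hiv := i.isLt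
    have hjv := j.isLt
    rw [mul_Jt_apply, J_mul_apply]
    split_ifs with h1 h2 h2 <;>
      simp only [hg, Fin.val_mk] <;> split_ifs <;>
        first
          | rfl
          | (exact congrArg Neg.neg (congrArg y (Fin.ext (by simp; omega))))
          | (exfalso; omega)
  have hconj : g₀ * (Jmat 𝔽 n)ᵀ * g₀⁻¹ = Jmat 𝔽 n := by
    rw [hcommJ, mul_assoc, hGi, mul_one]
  -- column and row facts
  have hcol : -(g₀ *ᵥ e₁) = y := by
    funext i
    show -(g₀ *ᵥ Pi.single (⟨0, hn⟩ : Fin n) 1) i = y i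
    rw [Matrix.mulVec_single_one]
    show -(g₀ᵀ ⟨0, hn⟩ i) = y i
    rw [Matrix.transpose_apply, hg]
    rw [dif_pos (by simpa using i.isLt)]
    rw [neg_neg]
    exact congrArg y (Fin.ext (by simp))
  have hrow0 : e₁ ᵥ* g₀ = -y := by
    funext j
    show (Pi.single (⟨0, hn⟩ : Fin n) 1 ᵥ* g₀) j = -y j
    rw [Matrix.single_one_vecMul, Matrix.row_apply]
    rw [hg]
    rw [dif_pos (by simpa using j.isLt)]
    exact congrArg Neg.neg (congrArg y (Fin.ext (by simp)))
  have hinvrow : -(y ᵥ* g₀⁻¹) = e₁ := by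
    have hy' : (-y) ᵥ* g₀⁻¹ = e₁ := by
      rw [← hrow0, Matrix.vecMul_vecMul, hGi, Matrix.vecMul_one]
    rw [← hy', Matrix.neg_vecMul]
  -- square is identity
  have hsq : g₀ * (g₀ᵀ)⁻¹ = 1 := by rw [hsymm]; exact hGi
  -- conjugation on the GL-stabilizer
  have hconjGL : ∀ g : Matrix.GeneralLinearGroup (Fin n) 𝔽,
      ((g : Matrix (Fin n) (Fin n) 𝔽) * Jmat 𝔽 n = Jmat 𝔽 n * (g : Matrix (Fin n) (Fin n) 𝔽) ∧
        (g : Matrix (Fin n) (Fin n) 𝔽) *ᵥ y = y ∧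
        e₁ ᵥ* (g : Matrix (Fin n) (Fin n) 𝔽) = e₁) →
      g₀ * (((g : Matrix (Fin n) (Fin n) 𝔽)⁻¹)ᵀ) * g₀⁻¹ = ((g : Matrix (Fin n) (Fin n) 𝔽)⁻¹)ᵀ := by
    rintro g ⟨hgJ, hgy, hge⟩
    have hg1 : (g : Matrix (Fin n) (Fin n) 𝔽) = 1 :=
      centralizer_row_eq_one' hn _ hgJ hge
    rw [hg1, inv_one, Matrix.transpose_one, mul_one, hGi]
  refine ⟨hunit, ⟨hconj, hcol, hinvrow⟩, hsq, hconjGL, ?_⟩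
  -- the extended stabilizer
  have hJinv : g₀⁻¹ * Jmat 𝔽 n = (Jmat 𝔽 n)ᵀ * g₀⁻¹ := by
    calc g₀⁻¹ * Jmat 𝔽 n
        = g₀⁻¹ * (Jmat 𝔽 n * g₀ * g₀⁻¹) := by rw [mul_assoc (Jmat 𝔽 n), hGi, mul_one]
      _ = g₀⁻¹ * (g₀ * ((Jmat 𝔽 n)ᵀ * g₀⁻¹)) := by rw [← hcommJ, mul_assoc]
      _ = (Jmat 𝔽 n)ᵀ * g₀⁻¹ := by rw [← mul_assoc, hiG, one_mul]
  ext p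
  simp only [Set.mem_setOf_eq, Set.mem_insert_iff, Set.mem_singleton_iff]
  constructor
  · rintro ⟨hu, ht, hf⟩
    rcases p with ⟨A, b⟩
    cases b
    · right
      obtain ⟨h1, h2, h3⟩ := hf rfl
      have hb : A * g₀⁻¹ = 1 := by
        apply centralizer_row_eq_one' hn
        · calc A * g₀⁻¹ * Jmat 𝔽 n = A * ((Jmat 𝔽 n)ᵀ * g₀⁻¹) := by rw [mul_assoc, hJinv]
          _ = A * (Jmat 𝔽 n)ᵀ * g₀⁻¹ := by rw [mul_assoc]
          _ = Jmat 𝔽 n * (A * g₀⁻¹) := by rw [h1, mul_assoc]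
        · show e₁ ᵥ* (A * g₀⁻¹) = e₁
          rw [← Matrix.vecMul_vecMul, h3, Matrix.neg_vecMul, ← hinvrow]
      have hA : A = g₀ := by
        calc A = A * g₀⁻¹ * g₀ := by rw [mul_assoc, hiG, mul_one]
        _ = g₀ := by rw [hb, one_mul]
      simp [hA]
    · left
      obtain ⟨h1, h2, h3⟩ := ht rfl
      have hA : A = 1 := centralizer_row_eq_one' hn _ h1 h3
      simp [hA]
  · rintro (h | h) <;> rw [h]
    · refine ⟨isUnit_one, fun _ => ⟨by simp, by simp, by simp⟩, fun hc => by simp at hc⟩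
    · refine ⟨hunit, fun hc => by simp at hc, fun _ => ⟨hcommJ, hcol, hrow0⟩⟩
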